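/- arXiv:1306.3727 — 4 statements merged into one kernel-verified Lean document; each statement's English description precedes it below -/
import Mathlib

section
/- Let ζ be the permutation on {1,…,3n} defined by ζ(3k+1)=3k+2, ζ(3k+2)=3k+3, ζ(3k+3)=3k+1 (0 ≤ k ≤ n−1). For a fixed block {3k+1, 3k+2, 3k+3}, suppose S is a set of pairs chosen so that each pair is either (i, i) (representing match (wᵢ, aᵢ, bᵢ)) or (i, ζ(i)) (representing match (w̄ᵢ, aᵢ, b_{ζ(i)})) with exactly one pair per first coordinate i ∈ {3k+1,3k+2,3k+3}, and such that every second coordinate in the block appears exactly once. Then either all three pairs are of the form (i,i), or all three are of the form (i, ζ(i)). -/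
/-!
If `c i = false` but `c (ζ i) = true`, then both `i` and `ζ i` are matched to `ζ i`. So negative
choices propagate along `ζ`, and since `ζ` is a 3-cycle on the block, one negative choice forces
all three.
-/

section ThreeCycle

variable {α : Type*} (ζ : α → α) (c : α → Bool)

theorem choice_apply_eq_false_of_existsUnique {s : Finset α}
    (hs : ∀ j ∈ s, ∃! i, i ∈ s ∧ (if c i then i else ζ i) = j)
    {i : α} (hi : i ∈ s) (hζi : ζ i ∈ s) (hne : ζ i ≠ i) (hci : c i = false) :
    c (ζ i) = false := by
  by_contra hcζi
  rw [Bool.not_eq_false] at hcζi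
  exact hne <| ((hs _ hζi).unique ⟨hζi, by simp [hcζi]⟩ ⟨hi, by simp [hci]⟩)

theorem all_true_or_all_false_of_isThreeCycle [DecidableEq α] {a b d : α}
    (hab : ζ a = b) (hbd : ζ b = d) (hda : ζ d = a) (hab' : b ≠ a) (hbd' : d ≠ b) (hda' : a ≠ d)
    (hs : ∀ j ∈ ({a, b, d} : Finset α),
      ∃! i, i ∈ ({a, b, d} : Finset α) ∧ (if c i then i else ζ i) = j) :
    (∀ i ∈ ({a, b, d} : Finset α), c i = true) ∨
    (∀ i ∈ ({a, b, d} : Finset α), c i = false) := by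
  have hcab : c a = false → c b = false :=
    hab ▸ choice_apply_eq_false_of_existsUnique ζ c hs (by simp) (by simp [hab]) (hab ▸ hab')
  have hcbd : c b = false → c d = false :=
    hbd ▸ choice_apply_eq_false_of_existsUnique ζ c hs (by simp) (by simp [hbd]) (hbd ▸ hbd')
  have hcda : c d = false → c a = false :=
    hda ▸ choice_apply_eq_false_of_existsUnique ζ c hs (by simp) (by simp [hda]) (hda ▸ hda')
  simp only [Finset.mem_insert, Finset.mem_singleton, forall_eq_or_imp, forall_eq]
  revert hcab hcbd hcda
  cases c a <;> cases c b <;> cases c d <;> decide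

end ThreeCycle

/-- `c i = true` encodes the pair (i, i), i.e. the match (wᵢ, aᵢ, bᵢ), and `c i = false` the
pair (i, ζ(i)), i.e. the match (w̄ᵢ, aᵢ, b_{ζ(i)}). -/
theorem block_all_true_or_all_false_general (k : ℕ) (ζ : ℕ → ℕ)
    (hζ1 : ∀ k', ζ (3 * k' + 1) = 3 * k' + 2)
    (hζ2 : ∀ k', ζ (3 * k' + 2) = 3 * k' + 3)
    (hζ3 : ∀ k', ζ (3 * k' + 3) = 3 * k' + 1)
    (c : ℕ → Bool)
    (hbij : ∀ j ∈ ({3 * k + 1, 3 * k + 2, 3 * k + 3} : Finset ℕ),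
      ∃! i, i ∈ ({3 * k + 1, 3 * k + 2, 3 * k + 3} : Finset ℕ) ∧
        (if c i then i else ζ i) = j) :
    (∀ i ∈ ({3 * k + 1, 3 * k + 2, 3 * k + 3} : Finset ℕ), c i = true) ∨
    (∀ i ∈ ({3 * k + 1, 3 * k + 2, 3 * k + 3} : Finset ℕ), c i = false) :=
  all_true_or_all_false_of_isThreeCycle ζ c (hζ1 k) (hζ2 k) (hζ3 k) (by omega) (by omega)
    (by omega) hbij

/-- Within one block {3k+1, 3k+2, 3k+3}, if each index i chooses either the pair
(i, i) (match (wᵢ, aᵢ, bᵢ), encoded `c i = true`) or the pair (i, ζ(i))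
(match (w̄ᵢ, aᵢ, b_{ζ(i)}), encoded `c i = false`), and every second coordinate in the
block appears exactly once, then all three choices agree. -/
theorem block_all_true_or_all_false (n k : ℕ) (hk : k < n) (ζ : ℕ → ℕ)
    (hζ1 : ∀ k', ζ (3 * k' + 1) = 3 * k' + 2)
    (hζ2 : ∀ k', ζ (3 * k' + 2) = 3 * k' + 3)
    (hζ3 : ∀ k', ζ (3 * k' + 3) = 3 * k' + 1)
    (c : ℕ → Bool)
    (hbij : ∀ j ∈ ({3 * k + 1, 3 * k + 2, 3 * k + 3} : Finset ℕ),
      ∃! i, i ∈ ({3 * k + 1, 3 * k + 2, 3 * k + 3} : Finset ℕ) ∧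
        (if c i then i else ζ i) = j) :
    (∀ i ∈ ({3 * k + 1, 3 * k + 2, 3 * k + 3} : Finset ℕ), c i = true) ∨
    (∀ i ∈ ({3 * k + 1, 3 * k + 2, 3 * k + 3} : Finset ℕ), c i = false) :=
  block_all_true_or_all_false_general k ζ hζ1 hζ2 hζ3 c hbij
end

section
/- Let φ be a CNF formula and let φ′ be obtained from φ by Tovey's transformation: for each variable z occurring d ≥ 2 times, replace its occurrences with fresh variables z₁,…,z_d and add the implication-cycle clauses (z₁ ∨ ¬z₂), …, (z_d ∨ ¬z₁); for each variable occurring once, add the tautological clause (z ∨ ¬z). Then φ′ is satisfiable if and only if φ is satisfiable, and every variable of φ′ occurs exactly three times in φ′. -/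
/-- A CNF formula over variables `V`: a list of clauses, each a list of literals
(a variable together with a polarity). -/
abbrev CNF (V : Type) := List (List (V × Bool))

/-- An assignment satisfies a CNF formula if every clause contains a true literal. -/
def Satisfies {V : Type} (σ : V → Bool) (φ : CNF V) : Prop :=
  ∀ c ∈ φ, ∃ l ∈ c, σ l.1 = l.2

/-- Rename the literals of one clause, giving each occurrence of a variable `z`
the fresh copy `(z, j)` where `j` is the number of earlier occurrences of `z`
(recorded in the counter `cnt`). Returns the renamed clause and updated counter. -/
def renameClause : (ℕ → ℕ) → List (ℕ × Bool) → List ((ℕ × ℕ) × Bool) × (ℕ → ℕ)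
  | cnt, [] => ([], cnt)
  | cnt, l :: ls =>
      let rest := renameClause (Function.update cnt l.1 (cnt l.1 + 1)) ls
      (((l.1, cnt l.1), l.2) :: rest.1, rest.2)

/-- Rename all clauses of a CNF formula, threading the occurrence counter. -/
def renameCNF : (ℕ → ℕ) → CNF ℕ → CNF (ℕ × ℕ) × (ℕ → ℕ)
  | cnt, [] => ([], cnt)
  | cnt, c :: cs =>
      let rc := renameClause cnt c
      let rest := renameCNF rc.2 cs
      (rc.1 :: rest.1, rest.2)

/-- Number of occurrences of variable `z` in φ (as a positive or negative literal). -/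
def occCount (φ : CNF ℕ) (z : ℕ) : ℕ := (φ.flatten.map Prod.fst).count z

/-- The added clauses for a variable `z` with `d` occurrences: the tautological
clause (z ∨ ¬z) if `d ≤ 1`, and otherwise the implication cycle
(z₁ ∨ ¬z₂), (z₂ ∨ ¬z₃), …, (z_d ∨ ¬z₁). -/
def cycleClauses (z d : ℕ) : CNF (ℕ × ℕ) :=
  if d ≤ 1 then [[((z, 0), true), ((z, 0), false)]]
  else (List.range d).map fun j => [((z, j), true), ((z, (j + 1) % d), false)]

/-- Tovey's transformation: replace each occurrence of each variable by a fresh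
copy and append the cycle clauses for each variable. -/
def tovey (φ : CNF ℕ) : CNF (ℕ × ℕ) :=
  (renameCNF (fun _ => 0) φ).1 ++
    ((φ.flatten.map Prod.fst).dedup.flatMap fun z => cycleClauses z (occCount φ z))

/-- Number of occurrences of a variable in the transformed formula. -/
def occCount' (ψ : CNF (ℕ × ℕ)) (v : ℕ × ℕ) : ℕ := (ψ.flatten.map Prod.fst).count v

/-! The copy `(z, j)` of a variable `z` with `d` occurrences (`j < d`) occurs once in the renamed
formula and twice in the clauses added for `z`: once positively and once negatively, in the cycle
`(z₀ ∨ ¬z₁), …, (z_{d-1} ∨ ¬z₀)` or, when `d = 1`, in `z₀ ∨ ¬z₀`. The cycle is the chain of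
implications `z₀ ← z₁ ← ⋯ ← z_{d-1} ← z₀`, so a satisfying assignment of `tovey φ` is constant on
the copies of each variable and restricts, through the copies `(z, 0)`, to one of `φ`; conversely
an assignment of `φ` extended constantly to the copies satisfies `tovey φ`. -/

def CNF.vars {V : Type} (ψ : CNF V) : List V := ψ.flatten.map Prod.fst

lemma CNF.vars_append {V : Type} (ψ χ : CNF V) : (ψ ++ χ).vars = ψ.vars ++ χ.vars := by
  simp [CNF.vars]

section Satisfies

variable {V W : Type}

lemma satisfies_append_iff (σ : V → Bool) (ψ χ : CNF V) :
    Satisfies σ (ψ ++ χ) ↔ Satisfies σ ψ ∧ Satisfies σ χ := by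
  simp only [Satisfies, List.mem_append, or_imp, forall_and]

lemma satisfies_flatMap_iff {α : Type} (σ : V → Bool) (L : List α) (F : α → CNF V) :
    Satisfies σ (L.flatMap F) ↔ ∀ a ∈ L, Satisfies σ (F a) := by
  simp only [Satisfies, List.mem_flatMap, forall_exists_index, and_imp]
  exact ⟨fun h a ha c hc => h c a ha hc, fun h c a ha hc => h a ha c hc⟩

lemma satisfies_map_iff (f : V → W) (σ : W → Bool) (ψ : CNF V) :
    Satisfies σ (ψ.map (List.map (Prod.map f id))) ↔ Satisfies (σ ∘ f) ψ := by
  simp [Satisfies]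

lemma Satisfies.congr {σ σ' : V → Bool} {ψ : CNF V}
    (hs : Satisfies σ ψ) (h : ∀ v ∈ ψ.vars, σ v = σ' v) : Satisfies σ' ψ := by
  intro c hc
  obtain ⟨l, hl, hv⟩ := hs c hc
  exact ⟨l, hl, h l.1 (List.mem_map_of_mem (List.mem_flatten.2 ⟨c, hc, hl⟩)) ▸ hv⟩

end Satisfies

lemma renameClause_map_fst (cnt : ℕ → ℕ) (c : List (ℕ × Bool)) :
    (renameClause cnt c).1.map (Prod.map Prod.fst id) = c := by
  induction c generalizing cnt with
  | nil => rfl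
  | cons l ls ih => simp [renameClause, ih]

lemma renameCNF_map_fst (cnt : ℕ → ℕ) (φ : CNF ℕ) :
    (renameCNF cnt φ).1.map (List.map (Prod.map Prod.fst id)) = φ := by
  induction φ generalizing cnt with
  | nil => rfl
  | cons c cs ih => simp [renameCNF, ih, renameClause_map_fst]

lemma renameClause_snd_apply (cnt : ℕ → ℕ) (c : List (ℕ × Bool)) (z : ℕ) :
    (renameClause cnt c).2 z = cnt z + (c.map Prod.fst).count z := by
  induction c generalizing cnt with
  | nil => simp [renameClause]
  | cons l ls ih =>
    simp only [renameClause, ih, List.map_cons, List.count_cons]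
    by_cases h : l.1 = z <;> simp [Function.update, h] <;> omega

lemma count_renameClause (cnt : ℕ → ℕ) (c : List (ℕ × Bool)) (z j : ℕ) :
    ((renameClause cnt c).1.map Prod.fst).count (z, j) =
      if cnt z ≤ j ∧ j < cnt z + (c.map Prod.fst).count z then 1 else 0 := by
  induction c generalizing cnt with
  | nil => simp [renameClause]
  | cons l ls ih =>
    simp only [renameClause, List.map_cons, List.count_cons, ih, beq_iff_eq, Prod.mk.injEq]
    by_cases h : l.1 = z
    · subst h
      simp only [Function.update_self, true_and]
      split_ifs <;> omega
    · simp only [Function.update_of_ne (Ne.symm h), h, false_and, if_false, add_zero]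

lemma count_vars_renameCNF (cnt : ℕ → ℕ) (φ : CNF ℕ) (z j : ℕ) :
    (renameCNF cnt φ).1.vars.count (z, j) =
      if cnt z ≤ j ∧ j < cnt z + occCount φ z then 1 else 0 := by
  induction φ generalizing cnt with
  | nil => simp [renameCNF, CNF.vars, occCount]
  | cons c cs ih =>
    simp only [CNF.vars] at ih
    simp only [renameCNF, CNF.vars, occCount, List.flatten_cons, List.map_append,
      List.count_append, count_renameClause, ih, renameClause_snd_apply]
    split_ifs <;> omega

section Cycle

lemma vars_cycleClauses_of_two_le {z d : ℕ} (hd : 2 ≤ d) :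
    (cycleClauses z d).vars = (List.range d).flatMap fun i => [(z, i), (z, (i + 1) % d)] := by
  simp [CNF.vars, cycleClauses, show ¬d ≤ 1 by omega, List.flatMap, List.map_flatten,
    Function.comp_def]

lemma lt_of_mem_vars_cycleClauses {z d : ℕ} {v : ℕ × ℕ} (hv : v ∈ (cycleClauses z d).vars) :
    v.1 = z ∧ v.2 < max d 1 := by
  by_cases hd : d ≤ 1
  · simp_all [CNF.vars, cycleClauses]
  · rw [vars_cycleClauses_of_two_le (by omega)] at hv
    simp only [List.mem_flatMap, List.mem_range, List.mem_cons, List.not_mem_nil,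
      or_false] at hv
    obtain ⟨i, hi, rfl | rfl⟩ := hv
    · exact ⟨rfl, by omega⟩
    · exact ⟨rfl, lt_max_of_lt_left (Nat.mod_lt _ (by omega))⟩

lemma count_flatMap_pair {α β : Type} [BEq β] (l : List α) (f g : α → β) (b : β) :
    (l.flatMap fun a => [f a, g a]).count b = (l.map f).count b + (l.map g).count b := by
  induction l with
  | nil => rfl
  | cons a l ih =>
    simp only [List.flatMap_cons, List.map_cons, List.count_append, ih, List.count_cons,
      List.count_nil]
    omega

lemma map_succ_mod_range (d : ℕ) :
    (List.range d).map (fun i => (i + 1) % d) = (List.range d).rotate 1 := by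
  apply List.ext_getElem
  · simp
  · intro i _ _
    simp [List.getElem_rotate]

lemma count_vars_cycleClauses {z d j : ℕ} (hj : j < d) :
    (cycleClauses z d).vars.count (z, j) = 2 := by
  by_cases hd : d ≤ 1
  · obtain rfl : j = 0 := by omega
    simp [CNF.vars, cycleClauses, hd]
  have hinj : Function.Injective (Prod.mk z : ℕ → ℕ × ℕ) := Prod.mk_right_injective z
  have hcount : (List.range d).count j = 1 :=
    List.count_eq_one_of_mem List.nodup_range (List.mem_range.2 hj)
  have hsucc : ((List.range d).map fun i => (z, (i + 1) % d)).count (z, j) = 1 := by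
    rw [show (fun i => (z, (i + 1) % d)) = Prod.mk z ∘ fun i => (i + 1) % d from rfl,
      ← List.map_map, map_succ_mod_range,
      List.count_map_of_injective _ _ hinj, ((List.range d).rotate_perm 1).count_eq, hcount]
  rw [vars_cycleClauses_of_two_le (by omega), count_flatMap_pair, hsucc,
    List.count_map_of_injective _ _ hinj, hcount]

lemma satisfies_comp_fst_cycleClauses (τ : ℕ → Bool) (z d : ℕ) :
    Satisfies (τ ∘ Prod.fst) (cycleClauses z d) := by
  unfold cycleClauses
  split
  · intro c hc
    rw [List.mem_singleton.1 hc]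
    cases hτ : τ z
    · exact ⟨((z, 0), false), by simp, hτ⟩
    · exact ⟨((z, 0), true), by simp, hτ⟩
  · intro c hc
    obtain ⟨i, -, rfl⟩ := List.mem_map.1 hc
    cases hτ : τ z
    · exact ⟨((z, (i + 1) % d), false), by simp, hτ⟩
    · exact ⟨((z, i), true), by simp, hτ⟩

variable {σ : ℕ × ℕ → Bool} {z d : ℕ}

lemma Satisfies.cycleClauses_imp (hs : Satisfies σ (cycleClauses z d)) {i : ℕ} (hi : i < d)
    (h : σ (z, (i + 1) % d) = true) : σ (z, i) = true := by
  by_cases hd : d ≤ 1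
  · obtain ⟨rfl, rfl⟩ : d = 1 ∧ i = 0 := by omega
    simpa using h
  have hmem : [((z, i), true), ((z, (i + 1) % d), false)] ∈ cycleClauses z d := by
    rw [cycleClauses, if_neg hd]
    exact List.mem_map.2 ⟨i, List.mem_range.2 hi, rfl⟩
  obtain ⟨l, hl, hv⟩ := hs _ hmem
  simp only [List.mem_cons, List.not_mem_nil, or_false] at hl
  rcases hl with rfl | rfl
  · exact hv
  · simp [h] at hv

lemma Satisfies.cycleClauses_chain (hs : Satisfies σ (cycleClauses z d)) {i j : ℕ}
    (hij : i ≤ j) (hj : j < d) (h : σ (z, j) = true) : σ (z, i) = true := by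
  induction j, hij using Nat.le_induction with
  | base => exact h
  | succ j _ ih =>
    exact ih (by omega) (hs.cycleClauses_imp (by omega) (by rwa [Nat.mod_eq_of_lt hj]))

lemma Satisfies.cycleClauses_eq (hs : Satisfies σ (cycleClauses z d)) {j : ℕ} (hj : j < d) :
    σ (z, j) = σ (z, 0) := by
  have hwrap : σ (z, 0) = true → σ (z, d - 1) = true := fun h0 =>
    hs.cycleClauses_imp (by omega) (by rwa [Nat.sub_add_cancel (by omega), Nat.mod_self])
  apply Bool.eq_iff_iff.2
  exact ⟨hs.cycleClauses_chain (Nat.zero_le j) hj,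
    fun h0 => hs.cycleClauses_chain (by omega) (by omega) (hwrap h0)⟩

end Cycle

section Tovey

lemma count_vars_flatMap_cycleClauses (f : ℕ → ℕ) {L : List ℕ} (hL : L.Nodup) (v : ℕ × ℕ) :
    (CNF.vars (L.flatMap fun z => cycleClauses z (f z))).count v =
      if v.1 ∈ L then (cycleClauses v.1 (f v.1)).vars.count v else 0 := by
  induction L with
  | nil => rfl
  | cons a L ih =>
    obtain ⟨haL, hL⟩ := List.nodup_cons.1 hL
    rw [List.flatMap_cons, CNF.vars_append, List.count_append, ih hL]
    by_cases h : v.1 = a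
    · subst h
      simp [haL]
    · have hv : v ∉ (cycleClauses a (f a)).vars := fun hv => h (lt_of_mem_vars_cycleClauses hv).1
      simp [List.count_eq_zero_of_not_mem hv, h]

variable {φ : CNF ℕ}

lemma tovey_eq : tovey φ = (renameCNF (fun _ => 0) φ).1 ++
    φ.vars.dedup.flatMap fun z => cycleClauses z (occCount φ z) := rfl

lemma mem_vars_dedup_iff {z : ℕ} : z ∈ φ.vars.dedup ↔ 0 < occCount φ z :=
  List.mem_dedup.trans List.count_pos_iff.symm

lemma count_vars_tovey (v : ℕ × ℕ) :
    (tovey φ).vars.count v = (if v.2 < occCount φ v.1 then 1 else 0) +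
      if 0 < occCount φ v.1 then (cycleClauses v.1 (occCount φ v.1)).vars.count v else 0 := by
  rw [tovey_eq, CNF.vars_append, List.count_append, count_vars_flatMap_cycleClauses _
    (List.nodup_dedup _)]
  have hren := count_vars_renameCNF (fun _ => 0) φ v.1 v.2
  simp only [zero_le, true_and, zero_add] at hren
  rw [hren]
  by_cases h : 0 < occCount φ v.1
  · rw [if_pos (mem_vars_dedup_iff.2 h), if_pos h]
  · rw [if_neg (mt mem_vars_dedup_iff.1 h), if_neg h]

lemma lt_occCount_of_mem_vars_tovey {v : ℕ × ℕ} (hv : v ∈ (tovey φ).vars) :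
    v.2 < occCount φ v.1 := by
  have hpos := List.count_pos_iff.2 hv
  rw [count_vars_tovey] at hpos
  by_contra h₁
  rw [if_neg h₁, zero_add] at hpos
  split_ifs at hpos with h₂
  · have hv' := (lt_of_mem_vars_cycleClauses (List.count_pos_iff.1 hpos)).2
    exact h₁ (max_eq_left (Nat.succ_le_of_lt h₂) ▸ hv')
  · exact hpos.false

lemma occCount'_tovey {v : ℕ × ℕ} (hv : v ∈ (tovey φ).vars) : occCount' (tovey φ) v = 3 := by
  have hlt := lt_occCount_of_mem_vars_tovey hv
  change (tovey φ).vars.count v = 3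
  rw [count_vars_tovey, if_pos hlt, if_pos (by omega), count_vars_cycleClauses hlt]

lemma satisfies_tovey {τ : ℕ → Bool} (hτ : Satisfies τ φ) :
    Satisfies (τ ∘ Prod.fst) (tovey φ) := by
  rw [tovey_eq, satisfies_append_iff, satisfies_flatMap_iff, ← satisfies_map_iff,
    renameCNF_map_fst]
  exact ⟨hτ, fun z _ => satisfies_comp_fst_cycleClauses τ z _⟩

lemma Satisfies.of_tovey {σ : ℕ × ℕ → Bool} (hσ : Satisfies σ (tovey φ)) :
    Satisfies (fun z => σ (z, 0)) φ := by
  rw [tovey_eq, satisfies_append_iff, satisfies_flatMap_iff] at hσ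
  obtain ⟨hren, hcyc⟩ := hσ
  rw [← renameCNF_map_fst (fun _ => 0) φ, satisfies_map_iff]
  refine hren.congr fun v hv => ?_
  have hlt := lt_occCount_of_mem_vars_tovey
    (by rw [tovey_eq, CNF.vars_append]; exact List.mem_append_left _ hv)
  exact (hcyc v.1 (mem_vars_dedup_iff.2 (by omega))).cycleClauses_eq hlt

end Tovey

/-- Tovey's transformation preserves satisfiability, and every variable of the
resulting formula occurs exactly three times. -/
theorem tovey_equisat_and_three_occurrences (φ : CNF ℕ) :
    ((∃ σ, Satisfies σ (tovey φ)) ↔ (∃ σ, Satisfies σ φ)) ∧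
    ∀ v ∈ (tovey φ).flatten.map Prod.fst, occCount' (tovey φ) v = 3 :=
  ⟨⟨fun ⟨σ, hσ⟩ => ⟨fun z => σ (z, 0), hσ.of_tovey⟩,
      fun ⟨τ, hτ⟩ => ⟨τ ∘ Prod.fst, satisfies_tovey hτ⟩⟩,
    fun _ hv => occCount'_tovey hv⟩
end

section
/- Fix n ≥ 1 and ε with 0 < ε < 1/6, and let N ≥ n/ε². Model the rank-4 scheduling instance abstractly: there is a finite set of machines (one per match of a 3DM′ instance) and jobs (element jobs for X ∪ Y and dummy jobs for W), such that (a) each w- or w̄-job has processing time exactly 2 on machines whose match contains that element and processing time at least 1/(2ε) elsewhere; (b) each s-, s′-, a-, or b-job has processing time at least 1 on every machine, at most 1 + Cε (for a universal constant C) on machines whose match contains the element, and at least 1/(2ε) on all other machines. If the 3DM′ instance admits a perfect matching, then there is an assignment of all jobs to machines in which every machine has total load at most 2 + 2Cε. -/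
/-- An element is incident to a match (triple) if it is one of its coordinates. -/
def Incident {α : Type} (e : α) (t : α × α × α) : Prop :=
  e = t.1 ∨ e = t.2.1 ∨ e = t.2.2

instance {α : Type} [DecidableEq α] (e : α) (t : α × α × α) :
    Decidable (Incident e t) := by unfold Incident; infer_instance

/-- The degree d(e): the number of matches of `T` containing the element `e`. -/
def deg {α : Type} [DecidableEq α] (T : Finset (α × α × α)) (e : α) : ℕ :=
  (T.filter fun t => Incident e t).card

/-- The jobs of the scheduling instance: one element job per element of X ∪ Y,
and d(w) − 1 dummy jobs per element w of W. -/
abbrev SchedJobs {α : Type} [DecidableEq α] (W X Y : Finset α)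
    (T : Finset (α × α × α)) :=
  {e : α // e ∈ X ∪ Y} ⊕ (Σ w : {w : α // w ∈ W}, Fin (deg T w.1 - 1))

/-! Schedule from a perfect matching `T'`: every element job of `X ∪ Y` goes to the match of
`T'` containing it, and the `d(w) - 1` dummy jobs of `w ∈ W` go, one each, to the matches
containing `w` other than its `T'`-match. A machine of `T'` then runs exactly its `X`- and
`Y`-jobs, each of length at most `1 + Cε`; any other machine runs at most one dummy job, of
length `2`. -/

open Finset

theorem sum_ite_eq_le_card_mul {ι κ : Type*} [Fintype ι] [DecidableEq κ]
    (A : ι → κ) (f : ι → ℝ) (t : κ) {k : ℕ} {b : ℝ} (hb : 0 ≤ b)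
    (hcard : #{j | A j = t} ≤ k) (hf : ∀ j, A j = t → f j ≤ b) :
    (∑ j, if A j = t then f j else 0) ≤ k * b := by
  rw [← sum_filter]
  calc ∑ j with A j = t, f j ≤ #{j | A j = t} • b :=
        sum_le_card_nsmul _ _ _ fun j hj => hf j (mem_filter.1 hj).2
    _ ≤ k * b := by rw [nsmul_eq_mul]; gcongr

theorem Incident.eq_fst {α : Type} {e : α} {t : α × α × α} {S : Finset α} (h : Incident e t)
    (he : e ∉ S) (h₁ : t.2.1 ∈ S) (h₂ : t.2.2 ∈ S) : e = t.1 := by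
  rcases h with h | rfl | rfl
  exacts [h, absurd h₁ he, absurd h₂ he]

section

variable {α : Type} [DecidableEq α] {W X Y : Finset α} {T T' : Finset (α × α × α)}

theorem exists_injective_incident_not_mem (hT' : T' ⊆ T) {w : α}
    (hw : ∃! t, t ∈ T' ∧ Incident w t) :
    ∃ f : Fin (deg T w - 1) → α × α × α, Function.Injective f ∧
      ∀ i, f i ∈ T ∧ Incident w (f i) ∧ f i ∉ T' := by
  obtain ⟨m, ⟨hmT', hm⟩, hmuniq⟩ := hw
  have hmem : m ∈ T.filter (Incident w) := mem_filter.2 ⟨hT' hmT', hm⟩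
  let e := (equivFinOfCardEq (card_erase_of_mem hmem)).symm
  refine ⟨fun i => (e i).1, Subtype.val_injective.comp e.injective, fun i => ?_⟩
  obtain ⟨hne, hfilt⟩ := mem_erase.1 (e i).2
  obtain ⟨hT, hinc⟩ := mem_filter.1 hfilt
  exact ⟨hT, hinc, fun h => hne (hmuniq _ ⟨h, hinc⟩)⟩

theorem exists_injective_dummy_placement (hT' : T' ⊆ T)
    (hfst : ∀ w ∈ W, ∀ t ∈ T, Incident w t → w = t.1)
    (hpm : ∀ w ∈ W, ∃! t, t ∈ T' ∧ Incident w t) :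
    ∃ D : (Σ w : {w // w ∈ W}, Fin (deg T w.1 - 1)) → {t // t ∈ T},
      Function.Injective D ∧ ∀ d, Incident d.1.1 (D d).1 ∧ (D d).1 ∉ T' := by
  choose f hfinj hf using fun w : {w // w ∈ W} =>
    exists_injective_incident_not_mem hT' (hpm w.1 w.2)
  refine ⟨fun d => ⟨f d.1 d.2, (hf d.1 d.2).1⟩, ?_, fun d => (hf d.1 d.2).2⟩
  rintro ⟨w, i⟩ ⟨w', i'⟩ h
  have h : f w i = f w' i' := congrArg Subtype.val h
  -- a match has only one `W`-coordinate
  obtain rfl : w = w' := Subtype.ext <| by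
    rw [hfst w w.2 _ (hf w i).1 (hf w i).2.1, hfst w' w'.2 _ (hf w' i').1 (hf w' i').2.1, h]
  rw [hfinj w h]

variable {E : {e // e ∈ X ∪ Y} → {t // t ∈ T}}
  {D : (Σ w : {w // w ∈ W}, Fin (deg T w.1 - 1)) → {t // t ∈ T}} {t : {t // t ∈ T}}

theorem card_fiber_le_two (hWXY : Disjoint W (X ∪ Y))
    (hT : ∀ t ∈ T, t.1 ∈ W ∧ t.2.1 ∈ X ∧ t.2.2 ∈ Y)
    (hE : ∀ e, Incident e.1 (E e).1) (hD : ∀ d, (D d).1 ∉ T') (ht : t.1 ∈ T') :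
    #{j | Sum.elim E D j = t} ≤ 2 := by
  obtain ⟨hW, hX, hY⟩ := hT t.1 t.2
  refine (card_le_card (s := {j | Sum.elim E D j = t})
    (t := {.inl ⟨t.1.2.1, mem_union_left _ hX⟩, .inl ⟨t.1.2.2, mem_union_right _ hY⟩})
    ?_).trans card_le_two
  rintro (e | d) h <;> simp only [mem_filter, mem_univ, true_and, Sum.elim_inl, Sum.elim_inr] at h
  · rcases h ▸ hE e with h | h | h
    · exact absurd (h ▸ hW) (disjoint_right.1 hWXY e.2)
    all_goals simp [Subtype.ext_iff, h]
  · exact absurd (h ▸ ht) (hD d)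

theorem card_fiber_le_one (hE : ∀ e, (E e).1 ∈ T') (hD : Function.Injective D)
    (ht : t.1 ∉ T') : #{j | Sum.elim E D j = t} ≤ 1 := by
  refine card_le_one.2 ?_
  rintro (e | d) h (e' | d') h' <;>
    simp only [mem_filter, mem_univ, true_and, Sum.elim_inl, Sum.elim_inr] at h h'
  · exact absurd (h ▸ hE e) ht
  · exact absurd (h ▸ hE e) ht
  · exact absurd (h' ▸ hE e') ht
  · exact congrArg Sum.inr (hD (h.trans h'.symm))

end

theorem rank4_completeness_general {α : Type} [DecidableEq α]
    (ε C : ℝ) (hε : 0 < ε) (hC : 0 ≤ C)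
    (W X Y : Finset α)
    (hWX : Disjoint W X) (hWY : Disjoint W Y)
    (T : Finset (α × α × α))
    (hT : ∀ t ∈ T, t.1 ∈ W ∧ t.2.1 ∈ X ∧ t.2.2 ∈ Y)
    (p : SchedJobs W X Y T → {t // t ∈ T} → ℝ)
    (hdummy : ∀ (w : {w : α // w ∈ W}) (i : Fin (deg T w.1 - 1)) (t : {t // t ∈ T}),
      (Incident w.1 t.1 → p (Sum.inr ⟨w, i⟩) t = 2) ∧
      (¬ Incident w.1 t.1 → 1 / (2 * ε) ≤ p (Sum.inr ⟨w, i⟩) t))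
    (helem : ∀ (e : {e : α // e ∈ X ∪ Y}) (t : {t // t ∈ T}),
      1 ≤ p (Sum.inl e) t ∧
      (Incident e.1 t.1 → p (Sum.inl e) t ≤ 1 + C * ε) ∧
      (¬ Incident e.1 t.1 → 1 / (2 * ε) ≤ p (Sum.inl e) t))
    (hpm : ∃ T' ⊆ T, ∀ e ∈ W ∪ X ∪ Y, ∃! t, t ∈ T' ∧ Incident e t) :
    ∃ A : SchedJobs W X Y T → {t // t ∈ T},
      ∀ t : {t // t ∈ T},
        (∑ j, if A j = t then p j t else 0) ≤ 2 + 2 * C * ε := by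
  obtain ⟨T', hT'T, hpm⟩ := hpm
  have hWXY : Disjoint W (X ∪ Y) := disjoint_union_right.2 ⟨hWX, hWY⟩
  have hfst : ∀ w ∈ W, ∀ t ∈ T, Incident w t → w = t.1 := fun w hw t ht h =>
    h.eq_fst (disjoint_left.1 hWXY hw)
      (mem_union_left _ (hT t ht).2.1) (mem_union_right _ (hT t ht).2.2)
  have hcover : ∀ e : {e // e ∈ X ∪ Y}, ∃ t : {t // t ∈ T}, t.1 ∈ T' ∧ Incident e.1 t.1 :=
    fun e =>
      have ⟨t, ⟨ht, he⟩, _⟩ := hpm e (union_subset_union subset_union_right subset_rfl e.2)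
      ⟨⟨t, hT'T ht⟩, ht, he⟩
  choose E hE using hcover
  obtain ⟨D, hDinj, hD⟩ := exists_injective_dummy_placement hT'T hfst
    fun w hw => hpm w (subset_union_left (subset_union_left hw))
  refine ⟨Sum.elim E D, fun t => ?_⟩
  have hCε : 0 ≤ C * ε := mul_nonneg hC hε.le
  by_cases ht : t.1 ∈ T'
  · calc _ ≤ ((2 : ℕ) : ℝ) * (1 + C * ε) :=
          sum_ite_eq_le_card_mul _ _ _ (by linarith)
            (card_fiber_le_two hWXY hT (fun e => (hE e).2) (fun d => (hD d).2) ht) ?_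
      _ = 2 + 2 * C * ε := by push_cast; ring
    rintro (e | d) rfl
    · exact (helem e _).2.1 (hE e).2
    · exact absurd ht (hD d).2
  · calc _ ≤ ((1 : ℕ) : ℝ) * 2 :=
          sum_ite_eq_le_card_mul _ _ _ zero_le_two
            (card_fiber_le_one (fun e => (hE e).1) hDinj ht) ?_
      _ ≤ 2 + 2 * C * ε := by push_cast; linarith
    rintro (e | ⟨w, i⟩) rfl
    · exact absurd (hE e).1 ht
    · exact ((hdummy w i _).1 (hD ⟨w, i⟩).1).le

/-- Completeness of the rank-4 reduction: with the stated processing-time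
structure, a perfect matching of the 3DM′ instance yields a schedule in which
every machine has load at most 2 + 2Cε. -/
theorem rank4_completeness {α : Type} [DecidableEq α] [Fintype α]
    (n : ℕ) (hn : 1 ≤ n) (ε C N : ℝ) (hε : 0 < ε) (hε6 : ε < 1 / 6) (hC : 0 ≤ C)
    (hN : (n : ℝ) / ε ^ 2 ≤ N)
    (W X Y : Finset α)
    (hWX : Disjoint W X) (hWY : Disjoint W Y) (hXY : Disjoint X Y)
    (hWc : W.card = 6 * n) (hXc : X.card = 6 * n) (hYc : Y.card = 6 * n)
    (T : Finset (α × α × α))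
    (hT : ∀ t ∈ T, t.1 ∈ W ∧ t.2.1 ∈ X ∧ t.2.2 ∈ Y)
    (p : SchedJobs W X Y T → {t // t ∈ T} → ℝ)
    (hdummy : ∀ (w : {w : α // w ∈ W}) (i : Fin (deg T w.1 - 1)) (t : {t // t ∈ T}),
      (Incident w.1 t.1 → p (Sum.inr ⟨w, i⟩) t = 2) ∧
      (¬ Incident w.1 t.1 → 1 / (2 * ε) ≤ p (Sum.inr ⟨w, i⟩) t))
    (helem : ∀ (e : {e : α // e ∈ X ∪ Y}) (t : {t // t ∈ T}),
      1 ≤ p (Sum.inl e) t ∧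
      (Incident e.1 t.1 → p (Sum.inl e) t ≤ 1 + C * ε) ∧
      (¬ Incident e.1 t.1 → 1 / (2 * ε) ≤ p (Sum.inl e) t))
    (hpm : ∃ T' ⊆ T, ∀ e ∈ W ∪ X ∪ Y, ∃! t, t ∈ T' ∧ Incident e t) :
    ∃ A : SchedJobs W X Y T → {t // t ∈ T},
      ∀ t : {t // t ∈ T},
        (∑ j, if A j = t then p j t else 0) ≤ 2 + 2 * C * ε :=
  rank4_completeness_general ε C hε hC W X Y hWX hWY T hT p hdummy helem hpm
end

section
/- Under the same abstract processing-time assumptions as in the completeness direction (w/w̄-jobs have time 2 on incident machines and ≥ 1/(2ε) > 3 elsewhere; element jobs of X ∪ Y have time ≥ 1 everywhere and ≥ 1/(2ε) on non-incident machines; there are d(w)−1 dummy jobs per element w of W, where d(w) is the number of matches containing w), if there is an assignment of all jobs to machines with every machine's load strictly less than 3, then the set of matches corresponding to machines carrying no w- or w̄-job is a perfect matching of the 3DM′ instance. -/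
/-!
Every processing time is at least 1 and exceeds 3 off the incident machines, so in a schedule of
load below 3 every job runs on an incident machine, and a machine running a dummy job (time 2)
runs nothing else. The `d(w) - 1` dummies of `w` thus fill all but at most one of the `d(w)`
machines incident to `w`, so a dummy-free machine is determined by its `W`-coordinate and there
are at most `|W|` of them. Conversely, every `x ∈ X` is the `X`-coordinate of the dummy-free
machine running the job of `x`, so there are at least `|X| = |W|` of them. Hence the coordinate
maps from the dummy-free machines to `W`, `X` and `Y` are bijections.
-/

open Finset Function

namespace Schedule

variable {J M : Type*} [Fintype J] [DecidableEq M]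

def load (p : J → M → ℝ) (A : J → M) (t : M) : ℝ :=
  ∑ j, if A j = t then p j t else 0

variable {p : J → M → ℝ} {A : J → M}

theorem procTime_le_load (hp : ∀ j t, 0 ≤ p j t) (j : J) : p j (A j) ≤ load p A (A j) := by
  unfold load
  simpa using single_le_sum (f := fun i => if A i = A j then p i (A j) else 0)
    (fun i _ => by split_ifs <;> simp [hp]) (mem_univ j)

theorem eq_of_load_lt_add (hp : ∀ j t, 0 ≤ p j t) {j j' : J}
    (hlt : load p A (A j) < p j (A j) + p j' (A j)) (h : A j' = A j) : j' = j := by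
  by_contra hne
  have := add_le_sum (f := fun i => if A i = A j then p i (A j) else 0)
    (fun i _ => by split_ifs <;> simp [hp]) (mem_univ j) (mem_univ j') (Ne.symm hne)
  simp only [if_pos h] at this
  exact (this.trans_lt hlt).false

end Schedule

theorem Set.BijOn.existsUnique {α β : Type*} {f : α → β} {s : Set α} {t : Set β}
    (h : Set.BijOn f s t) {b : β} (hb : b ∈ t) : ∃! a, a ∈ s ∧ f a = b := by
  obtain ⟨a, ha, rfl⟩ := h.surjOn hb
  exact ⟨a, ⟨ha, rfl⟩, fun a' ⟨ha', he⟩ => h.injOn ha' ha he⟩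

theorem Finset.card_inter_le_one_of_injective {β : Type*} [DecidableEq β] {s M : Finset β}
    {d : ℕ} (hs : s.card ≤ d) (f : Fin (d - 1) → β) (hf : Injective f)
    (hfs : ∀ i, f i ∈ s \ M) : (s ∩ M).card ≤ 1 := by
  have hsM := card_le_card_of_injOn (s := univ) f (fun i _ => hfs i) hf.injOn
  rw [card_univ, Fintype.card_fin] at hsM
  have := card_sdiff_add_card_inter s M
  omega

section Matching

variable {α : Type} {W X Y : Finset α}

theorem incident_iff_fst_eq {w : α} {t : α × α × α} (hWX : Disjoint W X) (hWY : Disjoint W Y)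
    (hw : w ∈ W) (ht : t.1 ∈ W ∧ t.2.1 ∈ X ∧ t.2.2 ∈ Y) : Incident w t ↔ t.1 = w := by
  have := disjoint_left.1 hWX hw
  have := disjoint_left.1 hWY hw
  unfold Incident
  grind

theorem incident_iff_snd_fst_eq {x : α} {t : α × α × α} (hWX : Disjoint W X)
    (hXY : Disjoint X Y) (hx : x ∈ X) (ht : t.1 ∈ W ∧ t.2.1 ∈ X ∧ t.2.2 ∈ Y) :
    Incident x t ↔ t.2.1 = x := by
  have := disjoint_right.1 hWX hx
  have := disjoint_left.1 hXY hx
  unfold Incident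
  grind

theorem incident_iff_snd_snd_eq {y : α} {t : α × α × α} (hWY : Disjoint W Y)
    (hXY : Disjoint X Y) (hy : y ∈ Y) (ht : t.1 ∈ W ∧ t.2.1 ∈ X ∧ t.2.2 ∈ Y) :
    Incident y t ↔ t.2.2 = y := by
  have := disjoint_right.1 hWY hy
  have := disjoint_right.1 hXY hy
  unfold Incident
  grind

variable [DecidableEq α] {T : Finset (α × α × α)}

theorem card_filter_incident_le_deg (e : α) :
    (univ.filter fun t : {t // t ∈ T} => Incident e t.1).card ≤ deg T e :=
  card_le_card_of_injOn Subtype.val (fun t ht => by simpa using ht) Subtype.val_injective.injOn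

def dummyFree (A : SchedJobs W X Y T → {t // t ∈ T}) : Finset {t // t ∈ T} :=
  univ.filter fun t => ∀ (w : {w // w ∈ W}) (i : Fin (deg T w.1 - 1)), A (.inr ⟨w, i⟩) ≠ t

variable {A : SchedJobs W X Y T → {t // t ∈ T}}

theorem assign_inl_mem_dummyFree (hsolo : ∀ d j, A j = A (.inr d) → j = .inr d)
    (e : {e // e ∈ X ∪ Y}) : A (.inl e) ∈ dummyFree A :=
  mem_filter.2 ⟨mem_univ _, fun w i h => Sum.inl_ne_inr (hsolo ⟨w, i⟩ (.inl e) h.symm)⟩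

theorem injOn_fst_dummyFree (hT : ∀ t ∈ T, t.1 ∈ W ∧ t.2.1 ∈ X ∧ t.2.2 ∈ Y)
    (hincD : ∀ w i, Incident w.1 (A (.inr ⟨w, i⟩)).1)
    (hsolo : ∀ d j, A j = A (.inr d) → j = .inr d) :
    Set.InjOn (fun t : {t // t ∈ T} => t.1.1) (dummyFree A : Set {t // t ∈ T}) := by
  intro t ht t' ht' (h : t.1.1 = t'.1.1)
  let w : {w // w ∈ W} := ⟨t.1.1, (hT _ t.2).1⟩
  have hinj : Injective fun i => A (.inr ⟨w, i⟩) := fun i i' hii' => by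
    simpa using hsolo ⟨w, i'⟩ (.inr ⟨w, i⟩) hii'
  have hle := card_inter_le_one_of_injective (M := dummyFree A)
    (card_filter_incident_le_deg (T := T) w.1) _ hinj
    fun i => mem_sdiff.2 ⟨mem_filter.2 ⟨mem_univ _, hincD w i⟩,
      fun hM => (mem_filter.1 hM).2 w i rfl⟩
  exact card_le_one.1 hle t (mem_inter.2 ⟨mem_filter.2 ⟨mem_univ _, .inl rfl⟩, ht⟩)
    t' (mem_inter.2 ⟨mem_filter.2 ⟨mem_univ _, .inl h⟩, ht'⟩)

theorem surjOn_dummyFree {S : Finset α} (hS : S ⊆ X ∪ Y) {f : α × α × α → α}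
    (hf : ∀ e ∈ S, ∀ t ∈ T, Incident e t → f t = e)
    (hincE : ∀ e, Incident e.1 (A (.inl e)).1)
    (hsolo : ∀ d j, A j = A (.inr d) → j = .inr d) :
    Set.SurjOn (fun t : {t // t ∈ T} => f t.1) (dummyFree A : Set {t // t ∈ T}) S := fun e he =>
  ⟨A (.inl ⟨e, hS he⟩), assign_inl_mem_dummyFree hsolo _,
    hf e he _ (A _).2 (hincE ⟨e, hS he⟩)⟩

theorem existsUnique_dummyFree_incident_of_bijOn {S : Finset α} {f : α × α × α → α}
    (h : Set.BijOn (fun t : {t // t ∈ T} => f t.1) (dummyFree A : Set {t // t ∈ T}) S)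
    {e : α} (he : e ∈ S) (hf : ∀ t ∈ T, Incident e t ↔ f t = e) :
    ∃! t : {t // t ∈ T}, (∀ (w : {w // w ∈ W}) (i : Fin (deg T w.1 - 1)),
      A (.inr ⟨w, i⟩) ≠ t) ∧ Incident e t.1 :=
  (existsUnique_congr fun t => by simp [dummyFree, hf t.1 t.2]).1 (h.existsUnique he)

theorem existsUnique_dummyFree_incident_of_card_le
    (hWX : Disjoint W X) (hWY : Disjoint W Y) (hXY : Disjoint X Y)
    (hcardX : W.card ≤ X.card) (hcardY : W.card ≤ Y.card)
    (hT : ∀ t ∈ T, t.1 ∈ W ∧ t.2.1 ∈ X ∧ t.2.2 ∈ Y)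
    (hincE : ∀ e, Incident e.1 (A (.inl e)).1)
    (hincD : ∀ w i, Incident w.1 (A (.inr ⟨w, i⟩)).1)
    (hsolo : ∀ d j, A j = A (.inr d) → j = .inr d) :
    ∀ e ∈ W ∪ X ∪ Y, ∃! t : {t // t ∈ T},
      (∀ (w : {w : α // w ∈ W}) (i : Fin (deg T w.1 - 1)),
        A (Sum.inr ⟨w, i⟩) ≠ t) ∧ Incident e t.1 := by
  have hmaps : ∀ {S : Finset α} {f : α × α × α → α}, (∀ t ∈ T, f t ∈ S) →
      Set.MapsTo (fun t : {t // t ∈ T} => f t.1) (dummyFree A : Set {t // t ∈ T}) S :=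
    fun h t _ => h t.1 t.2
  have hmW := hmaps fun t ht => (hT t ht).1
  have hmX := hmaps fun t ht => (hT t ht).2.1
  have hmY := hmaps fun t ht => (hT t ht).2.2
  have hW := injOn_fst_dummyFree hT hincD hsolo
  have hX := surjOn_dummyFree subset_union_left
    (fun x hx t ht => (incident_iff_snd_fst_eq hWX hXY hx (hT t ht)).1) hincE hsolo
  have hY := surjOn_dummyFree subset_union_right
    (fun y hy t ht => (incident_iff_snd_snd_eq hWY hXY hy (hT t ht)).1) hincE hsolo
  have hMW := card_le_card_of_injOn _ hmW hW
  have hXM := card_le_card_of_surjOn _ hX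
  intro e he
  rcases mem_union.1 he with he | heY
  · rcases mem_union.1 he with heW | heX
    · exact existsUnique_dummyFree_incident_of_bijOn
        ⟨hmW, hW, surjOn_of_injOn_of_card_le _ hmW hW (by omega)⟩ heW
        fun t ht => incident_iff_fst_eq hWX hWY heW (hT t ht)
    · exact existsUnique_dummyFree_incident_of_bijOn
        ⟨hmX, injOn_of_surjOn_of_card_le _ hmX hX (by omega), hX⟩ heX
        fun t ht => incident_iff_snd_fst_eq hWX hXY heX (hT t ht)
  · exact existsUnique_dummyFree_incident_of_bijOn
      ⟨hmY, injOn_of_surjOn_of_card_le _ hmY hY (by omega), hY⟩ heY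
      fun t ht => incident_iff_snd_snd_eq hWY hXY heY (hT t ht)

end Matching

theorem rank4_soundness_general {α : Type} [DecidableEq α]
    (n : ℕ) (ε : ℝ) (hε : 0 < ε) (hε6 : ε < 1 / 6)
    (W X Y : Finset α)
    (hWX : Disjoint W X) (hWY : Disjoint W Y) (hXY : Disjoint X Y)
    (hWc : W.card = 6 * n) (hXc : X.card = 6 * n) (hYc : Y.card = 6 * n)
    (T : Finset (α × α × α))
    (hT : ∀ t ∈ T, t.1 ∈ W ∧ t.2.1 ∈ X ∧ t.2.2 ∈ Y)
    (p : SchedJobs W X Y T → {t // t ∈ T} → ℝ)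
    (hdummy : ∀ (w : {w : α // w ∈ W}) (i : Fin (deg T w.1 - 1)) (t : {t // t ∈ T}),
      (Incident w.1 t.1 → p (Sum.inr ⟨w, i⟩) t = 2) ∧
      (¬ Incident w.1 t.1 → 1 / (2 * ε) ≤ p (Sum.inr ⟨w, i⟩) t))
    (helem : ∀ (e : {e : α // e ∈ X ∪ Y}) (t : {t // t ∈ T}),
      1 ≤ p (Sum.inl e) t ∧
      (¬ Incident e.1 t.1 → 1 / (2 * ε) ≤ p (Sum.inl e) t))
    (A : SchedJobs W X Y T → {t // t ∈ T})
    (hload : ∀ t : {t // t ∈ T},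
      (∑ j, if A j = t then p j t else 0) < 3) :
    ∀ e ∈ W ∪ X ∪ Y, ∃! t : {t // t ∈ T},
      (∀ (w : {w : α // w ∈ W}) (i : Fin (deg T w.1 - 1)),
        A (Sum.inr ⟨w, i⟩) ≠ t) ∧ Incident e t.1 := by
  have hbig : (3 : ℝ) < 1 / (2 * ε) := by
    rw [lt_div_iff₀ (by positivity)]
    linarith
  have hp : ∀ j t, 1 ≤ p j t := by
    rintro (e | ⟨w, i⟩) t
    · exact (helem e t).1
    · by_cases h : Incident w.1 t.1
      · linarith [(hdummy w i t).1 h]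
      · linarith [(hdummy w i t).2 h]
  have hp0 : ∀ j t, 0 ≤ p j t := fun j t => zero_le_one.trans (hp j t)
  have hA : ∀ j, p j (A j) < 3 := fun j => (Schedule.procTime_le_load hp0 j).trans_lt (hload _)
  have hincE : ∀ e, Incident e.1 (A (.inl e)).1 := fun e => by
    by_contra h
    linarith [(helem e _).2 h, hA (.inl e)]
  have hincD : ∀ w i, Incident w.1 (A (.inr ⟨w, i⟩)).1 := fun w i => by
    by_contra h
    linarith [(hdummy w i _).2 h, hA (.inr ⟨w, i⟩)]
  have hsolo : ∀ d j, A j = A (.inr d) → j = .inr d := by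
    rintro ⟨w, i⟩ j
    have hload' : Schedule.load p A (A (.inr ⟨w, i⟩)) < 3 := hload _
    refine Schedule.eq_of_load_lt_add hp0 ?_
    linarith [(hdummy w i _).1 (hincD w i), hp j (A (.inr ⟨w, i⟩))]
  exact existsUnique_dummyFree_incident_of_card_le hWX hWY hXY (by omega) (by omega) hT
    hincE hincD hsolo

/-- Soundness of the rank-4 reduction: with the stated processing-time
structure, a schedule with every machine load strictly less than 3 yields a
perfect matching, namely the matches of the machines carrying no w/w̄-job. -/
theorem rank4_soundness {α : Type} [DecidableEq α] [Fintype α]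
    (n : ℕ) (hn : 1 ≤ n) (ε : ℝ) (hε : 0 < ε) (hε6 : ε < 1 / 6)
    (W X Y : Finset α)
    (hWX : Disjoint W X) (hWY : Disjoint W Y) (hXY : Disjoint X Y)
    (hWc : W.card = 6 * n) (hXc : X.card = 6 * n) (hYc : Y.card = 6 * n)
    (T : Finset (α × α × α))
    (hT : ∀ t ∈ T, t.1 ∈ W ∧ t.2.1 ∈ X ∧ t.2.2 ∈ Y)
    (p : SchedJobs W X Y T → {t // t ∈ T} → ℝ)
    (hdummy : ∀ (w : {w : α // w ∈ W}) (i : Fin (deg T w.1 - 1)) (t : {t // t ∈ T}),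
      (Incident w.1 t.1 → p (Sum.inr ⟨w, i⟩) t = 2) ∧
      (¬ Incident w.1 t.1 → 1 / (2 * ε) ≤ p (Sum.inr ⟨w, i⟩) t))
    (helem : ∀ (e : {e : α // e ∈ X ∪ Y}) (t : {t // t ∈ T}),
      1 ≤ p (Sum.inl e) t ∧
      (¬ Incident e.1 t.1 → 1 / (2 * ε) ≤ p (Sum.inl e) t))
    (A : SchedJobs W X Y T → {t // t ∈ T})
    (hload : ∀ t : {t // t ∈ T},
      (∑ j, if A j = t then p j t else 0) < 3) :
    ∀ e ∈ W ∪ X ∪ Y, ∃! t : {t // t ∈ T},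
      (∀ (w : {w : α // w ∈ W}) (i : Fin (deg T w.1 - 1)),
        A (Sum.inr ⟨w, i⟩) ≠ t) ∧ Incident e t.1 :=
  rank4_soundness_general n ε hε hε6 W X Y hWX hWY hXY hWc hXc hYc T hT p hdummy helem A hload
end
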